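/- arXiv:1709.01000 — 2 statements merged into one kernel-verified Lean document; each statement's English description precedes it below -/
import Mathlib

section
/- For all constants C_E ≥ 1 and M ≥ 0 there exists C ≥ 0 such that the following holds. Let E be a real Banach space, A : E →L[ℝ] E with ‖exp(-tA)‖ ≤ C_E for all t ≥ 0, and let g : E → E be twice continuously (Fréchet) differentiable with ‖g(x)‖ ≤ M, ‖g'(x)‖ ≤ M and ‖g''(x)‖ ≤ M for all x ∈ E. Let 0 < h ≤ 1 and let u : ℝ → E be differentiable on [0,h] with u'(t) = -A(u t) + g(u t) on [0,h] and u 0 = u₀. Writing g_σ = g(exp(-σhA)u₀) and g'_σ = g'(exp(-σhA)u₀), one has ‖u(h) - exp(-hA)u₀ - h • ∫_{σ=0}^{1} exp(-(1-σ)hA) g_σ dσ - h² • ∫_{σ=0}^{1} ∫_{η=0}^{σ} exp(-(1-σ)hA)( g'_σ ( exp(-(σ-η)hA) g_η ) ) dη dσ‖ ≤ C · h³. -/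
/-- The operator exponential `exp(tA)` of a continuous linear operator. -/
noncomputable def opexp {E : Type*} [NormedAddCommGroup E] [NormedSpace ℝ E]
    [CompleteSpace E] (A : E →L[ℝ] E) (t : ℝ) : E →L[ℝ] E :=
  NormedSpace.exp (t • A)

/-!
Put `v s = exp(-sA) u₀`. Variation of constants turns the equation into the mild form
`u t = v t + ∫₀ᵗ exp(-(t-s)A) g(u s) ds`, so `‖u s - v s‖ ≤ C_E M s`; replacing `u` by `v` in
the integrand gives `W s = ∫₀ˢ exp(-(s-r)A) g(v r) dr` with `‖u s - v s - W s‖ ≤ C_E² M² s²`.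
After the substitution `s = σh` the two tree integrals are the Duhamel integrals of `g ∘ v`
and of `g'(v) W`, so the defect is the Duhamel integral of
`g(u) - g(v) - g'(v) W = [g(u) - g(v) - g'(v)(u - v)] + g'(v)(u - v - W)`,
which is `O(s²)` by Taylor's formula and the two bounds above; integrating over `[0, h]` gives
`2 C_E³ M³ h³`.
-/

open MeasureTheory Set

section Opexp

variable {E : Type*} [NormedAddCommGroup E] [NormedSpace ℝ E] [CompleteSpace E]
  (A : E →L[ℝ] E)

lemma opexp_zero_apply (x : E) : opexp A 0 x = x := by
  simp [opexp, NormedSpace.exp_zero]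

lemma opexp_apply_opexp_apply (a b : ℝ) (x : E) :
    opexp A a (opexp A b x) = opexp A (a + b) x := by
  let : NormedAlgebra ℚ (E →L[ℝ] E) := .restrictScalars ℚ ℝ _
  have hcomm : Commute (a • A) (b • A) := ((Commute.refl A).smul_left a).smul_right b
  rw [opexp, opexp, opexp, add_smul, NormedSpace.exp_add_of_commute hcomm]
  rfl

@[fun_prop]
lemma continuous_opexp : Continuous (opexp A) :=
  letI : NormedAlgebra ℚ (E →L[ℝ] E) := .restrictScalars ℚ ℝ _
  NormedSpace.exp_continuous.comp (continuous_id.smul continuous_const)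

lemma hasDerivAt_opexp_apply {u : ℝ → E} {d : E} {s : ℝ} (hu : HasDerivAt u d s) :
    HasDerivAt (fun r => opexp A r (u r)) (opexp A s (A (u s) + d)) s := by
  simpa [opexp] using (hasDerivAt_exp_smul_const (𝕂 := ℝ) A s).clm_apply hu

end Opexp

section Duhamel

variable {E : Type*} [NormedAddCommGroup E] [NormedSpace ℝ E] [CompleteSpace E]
  (A : E →L[ℝ] E)

noncomputable def duhamel (F : ℝ → E) (t : ℝ) : E :=
  ∫ s in (0 : ℝ)..t, opexp A (-(t - s)) (F s)

variable {A}

lemma intervalIntegrable_duhamel_integrand {F : ℝ → E} {t : ℝ}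
    (hF : ContinuousOn F (uIcc 0 t)) :
    IntervalIntegrable (fun s => opexp A (-(t - s)) (F s)) volume 0 t :=
  ContinuousOn.intervalIntegrable (by fun_prop)

lemma duhamel_sub {F G : ℝ → E} {t : ℝ} (hF : ContinuousOn F (uIcc 0 t))
    (hG : ContinuousOn G (uIcc 0 t)) :
    duhamel A F t - duhamel A G t = duhamel A (fun s => F s - G s) t := by
  simp only [duhamel, map_sub]
  exact (intervalIntegral.integral_sub (intervalIntegrable_duhamel_integrand hF)
    (intervalIntegrable_duhamel_integrand hG)).symm

lemma norm_duhamel_le {C K t : ℝ} (hA : ∀ t : ℝ, 0 ≤ t → ‖opexp A (-t)‖ ≤ C) (ht : 0 ≤ t)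
    {F : ℝ → E} (hF : ∀ s ∈ Icc 0 t, ‖F s‖ ≤ K) : ‖duhamel A F t‖ ≤ C * K * t := by
  have hC : 0 ≤ C := (norm_nonneg _).trans (hA 0 le_rfl)
  have hbound : ∀ s ∈ uIoc 0 t, ‖opexp A (-(t - s)) (F s)‖ ≤ C * K := by
    intro s hs
    rw [uIoc_of_le ht] at hs
    exact ((opexp A _).le_of_opNorm_le (hA _ (sub_nonneg.2 hs.2)) _).trans
      (mul_le_mul_of_nonneg_left (hF s (Ioc_subset_Icc_self hs)) hC)
  simpa only [duhamel, sub_zero, abs_of_nonneg ht] using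
    intervalIntegral.norm_integral_le_of_norm_le_const hbound

lemma duhamel_eq_opexp_integral {F : ℝ → E} {t : ℝ} (hF : ContinuousOn F (uIcc 0 t)) :
    duhamel A F t = opexp A (-t) (∫ s in (0 : ℝ)..t, opexp A s (F s)) := by
  rw [← ContinuousLinearMap.intervalIntegral_comp_comm _
    ((continuous_opexp A).continuousOn.clm_apply hF).intervalIntegrable]
  refine intervalIntegral.integral_congr fun s _ => ?_
  simp only [opexp_apply_opexp_apply]
  ring_nf

lemma continuous_duhamel {F : ℝ → E} (hF : Continuous F) : Continuous (duhamel A F) := by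
  simp_rw [funext fun t => duhamel_eq_opexp_integral (A := A) (t := t) hF.continuousOn]
  exact ((continuous_opexp A).comp continuous_neg).clm_apply
    (intervalIntegral.continuous_primitive
      (fun a b => ((continuous_opexp A).clm_apply hF).intervalIntegrable a b) 0)

theorem eq_opexp_add_duhamel_of_hasDerivAt {u F : ℝ → E} {t : ℝ} (ht : 0 ≤ t)
    (hF : ContinuousOn F (Icc 0 t))
    (hu : ∀ s ∈ Icc 0 t, HasDerivAt u (-(A (u s)) + F s) s) :
    u t = opexp A (-t) (u 0) + duhamel A F t := by
  rw [← uIcc_of_le ht] at hF hu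
  have hderiv : ∀ s ∈ uIcc 0 t, HasDerivAt (fun r => opexp A r (u r)) (opexp A s (F s)) s := by
    intro s hs
    simpa using hasDerivAt_opexp_apply A (hu s hs)
  rw [duhamel_eq_opexp_integral hF, intervalIntegral.integral_eq_sub_of_hasDerivAt hderiv
    ((continuous_opexp A).continuousOn.clm_apply hF).intervalIntegrable, map_sub,
    opexp_apply_opexp_apply, opexp_zero_apply, neg_add_cancel, opexp_zero_apply]
  abel

lemma smul_integral_comp_mul_eq_duhamel (F : ℝ → E) (h τ : ℝ) :
    h • ∫ η in (0 : ℝ)..τ, opexp A (-((τ - η) * h)) (F (η * h)) = duhamel A F (τ * h) := by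
  have := intervalIntegral.smul_integral_comp_mul_right
    (fun s => opexp A (-(τ * h - s)) (F s)) h (a := 0) (b := τ)
  rw [zero_mul] at this
  rw [duhamel, ← this]
  simp only [sub_mul]

lemma sq_smul_integral_integral_eq_duhamel (K : ℝ → E →L[ℝ] E) {G : ℝ → E}
    (hG : Continuous G) (h : ℝ) :
    h ^ 2 • ∫ σ in (0 : ℝ)..1, ∫ η in (0 : ℝ)..σ,
        opexp A (-((1 - σ) * h)) (K (σ * h) (opexp A (-((σ - η) * h)) (G (η * h))))
      = duhamel A (fun s => K s (duhamel A G s)) h := by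
  have hinner : ∀ σ : ℝ, h • ∫ η in (0 : ℝ)..σ,
        opexp A (-((1 - σ) * h)) (K (σ * h) (opexp A (-((σ - η) * h)) (G (η * h))))
      = opexp A (-((1 - σ) * h)) (K (σ * h) (duhamel A G (σ * h))) := by
    intro σ
    have hint : IntervalIntegrable (fun η => opexp A (-((σ - η) * h)) (G (η * h))) volume 0 σ :=
      Continuous.intervalIntegrable (by fun_prop) _ _
    rw [← smul_integral_comp_mul_eq_duhamel,
      ← ContinuousLinearMap.comp_apply (opexp A _) (K _), map_smul,
      ← ContinuousLinearMap.intervalIntegral_comp_comm _ hint]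
    rfl
  rw [pow_two, mul_smul, ← intervalIntegral.integral_smul]
  simp_rw [hinner]
  rw [smul_integral_comp_mul_eq_duhamel (fun s => K s (duhamel A G s)) h 1, one_mul]

end Duhamel

section Taylor

variable {E F : Type*} [NormedAddCommGroup E] [NormedSpace ℝ E] [NormedAddCommGroup F]
  [NormedSpace ℝ F] {g : E → F} {M : ℝ}

lemma norm_sub_le_of_norm_fderiv_le (hg : Differentiable ℝ g) (hg1 : ∀ x, ‖fderiv ℝ g x‖ ≤ M)
    (x y : E) : ‖g x - g y‖ ≤ M * ‖x - y‖ :=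
  convex_univ.norm_image_sub_le_of_norm_fderiv_le (fun z _ => hg z) (fun z _ => hg1 z)
    (mem_univ y) (mem_univ x)

lemma norm_fderiv_sub_le_of_norm_iteratedFDeriv_two_le (hg : ContDiff ℝ 2 g)
    (hg2 : ∀ x, ‖iteratedFDeriv ℝ 2 g x‖ ≤ M) (x y : E) :
    ‖fderiv ℝ g x - fderiv ℝ g y‖ ≤ M * ‖x - y‖ :=
  norm_sub_le_of_norm_fderiv_le ((hg.fderiv_right (m := 1) le_rfl).differentiable one_ne_zero)
    (fun z => by rw [← norm_iteratedFDeriv_one, norm_iteratedFDeriv_fderiv]; exact hg2 z) x y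

lemma norm_sub_sub_fderiv_le (hg : ContDiff ℝ 2 g) (hg2 : ∀ x, ‖iteratedFDeriv ℝ 2 g x‖ ≤ M)
    (x y : E) : ‖g x - g y - fderiv ℝ g y (x - y)‖ ≤ M * ‖x - y‖ ^ 2 := by
  have hbound : ∀ z ∈ segment ℝ y x, ‖fderiv ℝ g z - fderiv ℝ g y‖ ≤ M * ‖x - y‖ := fun z hz =>
    (norm_fderiv_sub_le_of_norm_iteratedFDeriv_two_le hg hg2 z y).trans
      (mul_le_mul_of_nonneg_left (norm_sub_le_of_mem_segment hz)
        ((norm_nonneg _).trans (hg2 x)))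
  have := (convex_segment y x).norm_image_sub_le_of_norm_fderiv_le'
    (fun z _ => (hg.differentiable two_ne_zero) z) hbound
    (left_mem_segment ℝ y x) (right_mem_segment ℝ y x)
  rwa [mul_assoc, ← pow_two] at this

end Taylor

section MildSolution

variable {E : Type*} [NormedAddCommGroup E] [NormedSpace ℝ E] [CompleteSpace E]
  {A : E →L[ℝ] E} {C_E M h : ℝ} {g : E → E} {u : ℝ → E} {u₀ : E}

lemma norm_sub_opexp_le_of_mild (hA : ∀ t : ℝ, 0 ≤ t → ‖opexp A (-t)‖ ≤ C_E)
    (hg0 : ∀ x, ‖g x‖ ≤ M)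
    (hmild : ∀ t ∈ Icc 0 h, u t = opexp A (-t) u₀ + duhamel A (fun s => g (u s)) t)
    {s : ℝ} (hs : s ∈ Icc 0 h) : ‖u s - opexp A (-s) u₀‖ ≤ C_E * M * s := by
  rw [hmild s hs, add_sub_cancel_left]
  exact norm_duhamel_le hA hs.1 fun r _ => hg0 _

lemma norm_sub_opexp_sub_duhamel_le_of_mild (hA : ∀ t : ℝ, 0 ≤ t → ‖opexp A (-t)‖ ≤ C_E)
    (hg : Differentiable ℝ g) (hg0 : ∀ x, ‖g x‖ ≤ M) (hg1 : ∀ x, ‖fderiv ℝ g x‖ ≤ M)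
    (hu : ContinuousOn u (Icc 0 h))
    (hmild : ∀ t ∈ Icc 0 h, u t = opexp A (-t) u₀ + duhamel A (fun s => g (u s)) t)
    {s : ℝ} (hs : s ∈ Icc 0 h) :
    ‖u s - opexp A (-s) u₀ - duhamel A (fun r => g (opexp A (-r) u₀)) s‖
      ≤ C_E ^ 2 * M ^ 2 * s ^ 2 := by
  have hC : 0 ≤ C_E := (norm_nonneg _).trans (hA 0 le_rfl)
  have hM : 0 ≤ M := (norm_nonneg _).trans (hg0 0)
  have hsub : uIcc 0 s ⊆ Icc 0 h := uIcc_subset_Icc ⟨le_rfl, hs.1.trans hs.2⟩ hs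
  have hgu : ContinuousOn (fun r => g (u r)) (uIcc 0 s) :=
    hg.continuous.comp_continuousOn (hu.mono hsub)
  have hgv : ContinuousOn (fun r => g (opexp A (-r) u₀)) (uIcc 0 s) := by
    have := hg.continuous; fun_prop
  have hbound : ∀ r ∈ Icc 0 s, ‖g (u r) - g (opexp A (-r) u₀)‖ ≤ M * (C_E * M * s) := by
    intro r hr
    have hr' : r ∈ Icc 0 h := ⟨hr.1, hr.2.trans hs.2⟩
    calc ‖g (u r) - g (opexp A (-r) u₀)‖ ≤ M * ‖u r - opexp A (-r) u₀‖ :=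
          norm_sub_le_of_norm_fderiv_le hg hg1 _ _
      _ ≤ M * (C_E * M * s) := by
          grw [norm_sub_opexp_le_of_mild hA hg0 hmild hr', hr.2]
  rw [hmild s hs, add_sub_cancel_left, duhamel_sub hgu hgv]
  calc _ ≤ C_E * (M * (C_E * M * s)) * s := norm_duhamel_le hA hs.1 hbound
    _ = C_E ^ 2 * M ^ 2 * s ^ 2 := by ring

lemma norm_taylor_remainder_le_of_mild (hA : ∀ t : ℝ, 0 ≤ t → ‖opexp A (-t)‖ ≤ C_E)
    (hg : ContDiff ℝ 2 g) (hg0 : ∀ x, ‖g x‖ ≤ M) (hg1 : ∀ x, ‖fderiv ℝ g x‖ ≤ M)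
    (hg2 : ∀ x, ‖iteratedFDeriv ℝ 2 g x‖ ≤ M) (hu : ContinuousOn u (Icc 0 h))
    (hmild : ∀ t ∈ Icc 0 h, u t = opexp A (-t) u₀ + duhamel A (fun s => g (u s)) t)
    {s : ℝ} (hs : s ∈ Icc 0 h) :
    ‖g (u s) - g (opexp A (-s) u₀) -
        fderiv ℝ g (opexp A (-s) u₀) (duhamel A (fun r => g (opexp A (-r) u₀)) s)‖
      ≤ 2 * C_E ^ 2 * M ^ 3 * s ^ 2 := by
  set v := opexp A (-s) u₀
  set W := duhamel A (fun r => g (opexp A (-r) u₀)) s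
  have hM : 0 ≤ M := (norm_nonneg _).trans (hg0 0)
  have hsplit : g (u s) - g v - fderiv ℝ g v W
      = (g (u s) - g v - fderiv ℝ g v (u s - v)) + fderiv ℝ g v (u s - v - W) := by
    simp only [map_sub]; abel
  rw [hsplit]
  calc _ ≤ M * ‖u s - v‖ ^ 2 + M * ‖u s - v - W‖ :=
        norm_add_le_of_le (norm_sub_sub_fderiv_le hg hg2 _ _)
          ((fderiv ℝ g v).le_of_opNorm_le (hg1 v) _)
    _ ≤ M * (C_E * M * s) ^ 2 + M * (C_E ^ 2 * M ^ 2 * s ^ 2) := by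
        grw [norm_sub_opexp_le_of_mild hA hg0 hmild hs,
          norm_sub_opexp_sub_duhamel_le_of_mild hA (hg.differentiable two_ne_zero) hg0 hg1 hu
            hmild hs]
    _ = 2 * C_E ^ 2 * M ^ 3 * s ^ 2 := by ring

theorem norm_sub_second_order_expansion_le_of_mild
    (hA : ∀ t : ℝ, 0 ≤ t → ‖opexp A (-t)‖ ≤ C_E)
    (hg : ContDiff ℝ 2 g) (hg0 : ∀ x, ‖g x‖ ≤ M) (hg1 : ∀ x, ‖fderiv ℝ g x‖ ≤ M)
    (hg2 : ∀ x, ‖iteratedFDeriv ℝ 2 g x‖ ≤ M) (hh : 0 ≤ h) (hu : ContinuousOn u (Icc 0 h))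
    (hmild : ∀ t ∈ Icc 0 h, u t = opexp A (-t) u₀ + duhamel A (fun s => g (u s)) t) :
    ‖u h - opexp A (-h) u₀ - duhamel A (fun s => g (opexp A (-s) u₀)) h -
        duhamel A (fun s => fderiv ℝ g (opexp A (-s) u₀)
          (duhamel A (fun r => g (opexp A (-r) u₀)) s)) h‖
      ≤ 2 * C_E ^ 3 * M ^ 3 * h ^ 3 := by
  have hC : 0 ≤ C_E := (norm_nonneg _).trans (hA 0 le_rfl)
  have hM : 0 ≤ M := (norm_nonneg _).trans (hg0 0)
  have hgc := hg.continuous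
  have hg'c : Continuous (fderiv ℝ g) := hg.continuous_fderiv two_ne_zero
  have hW : Continuous (duhamel A fun r => g (opexp A (-r) u₀)) :=
    continuous_duhamel (by fun_prop)
  have hu' : ContinuousOn u (uIcc 0 h) := by rwa [uIcc_of_le hh]
  rw [hmild h ⟨hh, le_rfl⟩, add_sub_cancel_left, duhamel_sub (by fun_prop) (by fun_prop),
    duhamel_sub (by fun_prop) (by fun_prop)]
  calc _ ≤ C_E * (2 * C_E ^ 2 * M ^ 3 * h ^ 2) * h := by
        refine norm_duhamel_le hA hh fun s hs => ?_
        have := hs.1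
        grw [norm_taylor_remainder_le_of_mild hA hg hg0 hg1 hg2 hu hmild hs, hs.2]
    _ = 2 * C_E ^ 3 * M ^ 3 * h ^ 3 := by ring

end MildSolution

/-- Second-order expansion of the exact solution of `u' + Au = g(u)` along the flow of the
homogeneous problem: the exact solution agrees with `exp(-hA)u₀` plus the elementary
integrals of the trees of orders one and two up to `O(h³)`, with a constant depending only
on `C_E` and `M`. -/
theorem stmt_4 (C_E M : ℝ) (hCE : 1 ≤ C_E) (hM : 0 ≤ M) :
    ∃ C : ℝ, 0 ≤ C ∧
      ∀ (E : Type) [NormedAddCommGroup E] [NormedSpace ℝ E] [CompleteSpace E]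
        (A : E →L[ℝ] E),
        (∀ t : ℝ, 0 ≤ t → ‖opexp A (-t)‖ ≤ C_E) →
        ∀ g : E → E, ContDiff ℝ 2 g →
          (∀ x : E, ‖g x‖ ≤ M) →
          (∀ x : E, ‖fderiv ℝ g x‖ ≤ M) →
          (∀ x : E, ‖iteratedFDeriv ℝ 2 g x‖ ≤ M) →
        ∀ h : ℝ, 0 < h → h ≤ 1 →
        ∀ (u : ℝ → E) (u₀ : E),
          (∀ t ∈ Set.Icc (0 : ℝ) h, HasDerivAt u (-(A (u t)) + g (u t)) t) →
          u 0 = u₀ →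
          ‖u h - opexp A (-h) u₀ -
            h • (∫ σ in (0 : ℝ)..1,
              opexp A (-((1 - σ) * h)) (g (opexp A (-(σ * h)) u₀))) -
            h ^ 2 • (∫ σ in (0 : ℝ)..1, ∫ η in (0 : ℝ)..σ,
              opexp A (-((1 - σ) * h))
                ((fderiv ℝ g (opexp A (-(σ * h)) u₀))
                  (opexp A (-((σ - η) * h)) (g (opexp A (-(η * h)) u₀)))))‖
            ≤ C * h ^ 3 := by
  have hC : 0 ≤ C_E := zero_le_one.trans hCE
  refine ⟨2 * C_E ^ 3 * M ^ 3, by positivity, ?_⟩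
  intro E _ _ _ A hA g hg hg0 hg1 hg2 h hh _ u u₀ hu hu₀
  have hgc := hg.continuous
  have hu_cont : ContinuousOn u (Icc 0 h) := fun t ht =>
    (hu t ht).continuousAt.continuousWithinAt
  have hmild : ∀ t ∈ Icc 0 h, u t = opexp A (-t) u₀ + duhamel A (fun s => g (u s)) t :=
    fun t ht => hu₀ ▸ eq_opexp_add_duhamel_of_hasDerivAt ht.1
      (hgc.comp_continuousOn (hu_cont.mono (Icc_subset_Icc_right ht.2)))
      fun s hs => hu s (Icc_subset_Icc_right ht.2 hs)
  rw [smul_integral_comp_mul_eq_duhamel (fun s => g (opexp A (-s) u₀)) h 1,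
    sq_smul_integral_integral_eq_duhamel (fun s => fderiv ℝ g (opexp A (-s) u₀))
      (G := fun s => g (opexp A (-s) u₀)) (by fun_prop),
    one_mul]
  exact norm_sub_second_order_expansion_le_of_mild hA hg hg0 hg1 hg2 hh.le hu_cont hmild
end

section
/- Let E be a real Banach space, A : E →L[ℝ] E continuous linear, and let g : E → E be twice continuously (Fréchet) differentiable. Fix h ∈ ℝ, w ∈ E and σ₂ ∈ ℝ. Define c : E → E by c(x) = A(g(x)) - (Dg)(x)(Ax) and, for σ₁ ∈ ℝ, Ψ(σ₁) = exp(-(1-σ₁)hA)( (Dg)(exp(-σ₁hA)w)( exp(-(σ₁-σ₂)hA)( g(exp(-σ₂hA) w) ) ) ). Then Ψ is differentiable in σ₁ with Ψ'(σ₁) = h • exp(-(1-σ₁)hA)( (Dc)(exp(-σ₁hA)w)( exp(-(σ₁-σ₂)hA)( g(exp(-σ₂hA)w) ) ) ). -/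
theorem fderiv_commutator_apply {E : Type*} [NormedAddCommGroup E] [NormedSpace ℝ E]
    (A : E →L[ℝ] E) {g : E → E} {x : E} (hg : ContDiffAt ℝ 2 g x) (y : E) :
    fderiv ℝ (fun x => A (g x) - fderiv ℝ g x (A x)) x y =
      A (fderiv ℝ g x y) - fderiv ℝ (fderiv ℝ g) x (A x) y - fderiv ℝ g x (A y) := by
  have hg' : HasFDerivAt (fderiv ℝ g) (fderiv ℝ (fderiv ℝ g) x) x :=
    ((hg.fderiv_right one_add_one_eq_two.le).differentiableAt one_ne_zero).hasFDerivAt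
  have hc : HasFDerivAt (fun x => A (g x) - fderiv ℝ g x (A x)) _ x :=
    (A.hasFDerivAt.comp x (hg.differentiableAt two_ne_zero).hasFDerivAt).sub
      (hg'.clm_apply A.hasFDerivAt)
  rw [hc.fderiv, hg.isSymmSndFDerivAt (by simp) (A x) y]
  simp only [sub_apply, add_apply, ContinuousLinearMap.coe_comp, Function.comp_apply,
    ContinuousLinearMap.flip_apply]
  abel

section

variable {E : Type*} [NormedAddCommGroup E] [NormedSpace ℝ E] [CompleteSpace E]

theorem hasDerivAt_opexp_comp (A : E →L[ℝ] E) {τ : ℝ → ℝ} {τ' s : ℝ} (hτ : HasDerivAt τ τ' s) :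
    HasDerivAt (fun s => opexp A (τ s)) (τ' • (opexp A (τ s) * A)) s :=
  (hasDerivAt_exp_smul_const A (τ s)).scomp s hτ

theorem hasDerivAt_opexp_comp_apply (A : E →L[ℝ] E) (v : E) {τ : ℝ → ℝ} {τ' s : ℝ}
    (hτ : HasDerivAt τ τ' s) :
    HasDerivAt (fun s => opexp A (τ s) v) (τ' • opexp A (τ s) (A v)) s := by
  simpa using (hasDerivAt_opexp_comp A hτ).clm_apply (hasDerivAt_const s v)

theorem opexp_apply_comm (A : E →L[ℝ] E) (t : ℝ) (y : E) :
    opexp A t (A y) = A (opexp A t y) :=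
  congrArg (· y) ((Commute.refl A).smul_right t).exp_right.symm

theorem hasDerivAt_opexp_apply_opexp (A : E →L[ℝ] E) {B : E → E →L[ℝ] E}
    {B' : E →L[ℝ] E →L[ℝ] E} (h σ₁ σ₂ : ℝ) (w v : E)
    (hB : HasFDerivAt B B' (opexp A (-(σ₁ * h)) w)) :
    HasDerivAt
      (fun s : ℝ => opexp A (-((1 - s) * h))
        (B (opexp A (-(s * h)) w) (opexp A (-((s - σ₂) * h)) v)))
      (h • opexp A (-((1 - σ₁) * h))
        (A (B (opexp A (-(σ₁ * h)) w) (opexp A (-((σ₁ - σ₂) * h)) v))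
          - B' (A (opexp A (-(σ₁ * h)) w)) (opexp A (-((σ₁ - σ₂) * h)) v)
          - B (opexp A (-(σ₁ * h)) w) (A (opexp A (-((σ₁ - σ₂) * h)) v)))) σ₁ := by
  have hU : HasDerivAt (fun s : ℝ => opexp A (-((1 - s) * h)))
      (h • (opexp A (-((1 - σ₁) * h)) * A)) σ₁ :=
    hasDerivAt_opexp_comp A
      (by simpa using ((hasDerivAt_id' σ₁).const_sub 1 |>.mul_const h).fun_neg)
  have hX : HasDerivAt (fun s : ℝ => opexp A (-(s * h)) w)
      (-h • A (opexp A (-(σ₁ * h)) w)) σ₁ := by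
    simpa only [opexp_apply_comm] using hasDerivAt_opexp_comp_apply A w
      (by simpa using ((hasDerivAt_id' σ₁).mul_const h).fun_neg)
  have hV : HasDerivAt (fun s : ℝ => opexp A (-((s - σ₂) * h)) v)
      (-h • A (opexp A (-((σ₁ - σ₂) * h)) v)) σ₁ := by
    simpa only [opexp_apply_comm] using hasDerivAt_opexp_comp_apply A v
      (by simpa using ((hasDerivAt_id' σ₁).sub_const σ₂ |>.mul_const h).fun_neg)
  -- without this type ascription, elaborating `clm_apply` below times out
  have hBX : HasDerivAt (fun s => B (opexp A (-(s * h)) w))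
      (B' (-h • A (opexp A (-(σ₁ * h)) w))) σ₁ := hB.comp_hasDerivAt σ₁ hX
  refine (hU.clm_apply (hBX.clm_apply hV)).congr_deriv ?_
  simp only [smul_apply, mul_apply_eq_comp, map_add, map_sub, map_smul]
  module

end

/-- Section 5.2: the `σ₁`-derivative of the order-two integrand
`Ψ(σ₁) = exp(-(1-σ₁)hA) (Dg)(exp(-σ₁hA)w)( exp(-(σ₁-σ₂)hA) g(exp(-σ₂hA)w) )` equals
`h • exp(-(1-σ₁)hA) (Dc)(exp(-σ₁hA)w)( exp(-(σ₁-σ₂)hA) g(exp(-σ₂hA)w) )` where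
`c(x) = A g(x) - (Dg)(x)(Ax)` is the Lie commutator. -/
theorem stmt_12 {E : Type*} [NormedAddCommGroup E] [NormedSpace ℝ E] [CompleteSpace E]
    (A : E →L[ℝ] E) (g : E → E) (hg : ContDiff ℝ 2 g)
    (h : ℝ) (w : E) (σ₂ : ℝ) (σ₁ : ℝ) :
    HasDerivAt
      (fun s : ℝ => opexp A (-((1 - s) * h))
        ((fderiv ℝ g (opexp A (-(s * h)) w))
          (opexp A (-((s - σ₂) * h)) (g (opexp A (-(σ₂ * h)) w)))))
      (h • opexp A (-((1 - σ₁) * h))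
        ((fderiv ℝ (fun x => A (g x) - (fderiv ℝ g x) (A x)) (opexp A (-(σ₁ * h)) w))
          (opexp A (-((σ₁ - σ₂) * h)) (g (opexp A (-(σ₂ * h)) w))))) σ₁ := by
  have hg' : Differentiable ℝ (fderiv ℝ g) :=
    (hg.fderiv_right one_add_one_eq_two.le).differentiable one_ne_zero
  rw [fderiv_commutator_apply A hg.contDiffAt]
  exact hasDerivAt_opexp_apply_opexp A h σ₁ σ₂ w _ (hg' _).hasFDerivAt
end
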